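/- For all integers a, b ≥ 0, the edge-colored distributive lattice L_G2(a,b) of G2-semistandard tableaux of shape (a,b) satisfies the structure condition for the G2 Cartan matrix with rows M_α = (2,−1), M_β = (−3,2): for every covering edge S ⋖ T of color γ, wt(T) = wt(S) + M_γ. -/

import Mathlib

/-- The two colors (simple-root labels) `α` and `β`. -/
inductive TwoColor : Type
  | alpha : TwoColor
  | beta : TwoColor
  deriving DecidableEq

/-- Lengths of paths of `r`-edges ending at `t`. -/
def chainsEndingAt {V : Type*} (r : V → V → Prop) (t : V) : Set ℕ :=
  {n : ℕ | ∃ c : ℕ → V, c n = t ∧ ∀ i : ℕ, i < n → r (c i) (c (i + 1))}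

/-- Lengths of paths of `r`-edges starting at `t`. -/
def chainsStartingAt {V : Type*} (r : V → V → Prop) (t : V) : Set ℕ :=
  {n : ℕ | ∃ c : ℕ → V, c 0 = t ∧ ∀ i : ℕ, i < n → r (c i) (c (i + 1))}

/-- `ρ`: the maximum number of edges in a chain of `r`-edges ending at `t`. -/
noncomputable def rhoOf {V : Type*} (r : V → V → Prop) (t : V) : ℕ :=
  sSup (chainsEndingAt r t)

/-- `δ`: the maximum number of edges in a chain of `r`-edges starting at `t`. -/
noncomputable def deltaOf {V : Type*} (r : V → V → Prop) (t : V) : ℕ :=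
  sSup (chainsStartingAt r t)

/-- `l = ρ + δ`. -/
noncomputable def lenOf {V : Type*} (r : V → V → Prop) (t : V) : ℕ :=
  rhoOf r t + deltaOf r t

/-- The weight `wt(t) = (ρ_α(t) − δ_α(t), ρ_β(t) − δ_β(t))` of an element of an
edge-colored poset whose (colored) covering relations are given by `cov`. -/
noncomputable def wtOf {V : Type*} (cov : TwoColor → V → V → Prop) (t : V) : ℤ × ℤ :=
  ((rhoOf (cov TwoColor.alpha) t : ℤ) - (deltaOf (cov TwoColor.alpha) t : ℤ),
   (rhoOf (cov TwoColor.beta) t : ℤ) - (deltaOf (cov TwoColor.beta) t : ℤ))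

/-- The structure condition for a `2 × 2` integer matrix `M` (given by its rows
`M γ` for `γ ∈ {α, β}`): along any covering edge of color `γ`, the weight changes by `M γ`. -/
def StructureCondition {V : Type*} (cov : TwoColor → V → V → Prop)
    (M : TwoColor → ℤ × ℤ) : Prop :=
  ∀ (γ : TwoColor) (s t : V), cov γ s t → wtOf cov t = wtOf cov s + M γ

/-- The elements of the distributive lattice `J(P)`: order ideals (lower sets) of `P`. -/
abbrev OrderIdeal (V : Type*) [PartialOrder V] : Type _ := {I : Set V // IsLowerSet I}

/-- The colored covering relation of `J_color(P)` for a vertex-colored poset `P`: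
`s ⋖ t` with color `γ` when `t ∖ s` is a single vertex of color `γ`. -/
def idealCov {V : Type*} [PartialOrder V] (vcolor : V → TwoColor) (γ : TwoColor)
    (s t : OrderIdeal V) : Prop :=
  ∃ u : V, vcolor u = γ ∧ u ∉ s.1 ∧ t.1 = insert u s.1
/-- A filling of the shape with `b` columns of length two (each recorded as
(top entry, bottom entry)) followed by `a` columns of length one. -/
abbrev TabT (a b : ℕ) : Type := (Fin b → ℕ × ℕ) × (Fin a → ℕ)

/-- `n_k(T)`: the number of entries of the tableau `T` equal to `k`. -/
def nkOf {m n : ℕ} (T : (Fin m → ℕ × ℕ) × (Fin n → ℕ)) (k : ℕ) : ℕ :=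
  (Finset.univ.filter fun j : Fin m => (T.1 j).1 = k).card +
    (Finset.univ.filter fun j : Fin m => (T.1 j).2 = k).card +
    (Finset.univ.filter fun i : Fin n => T.2 i = k).card

/-- The set of `A2`-semistandard tableaux of shape `(a,b)`: entries from `{1,2,3}`,
rows weakly increasing, columns strictly increasing. -/
def SA2 (a b : ℕ) : Set (TabT a b) :=
  {T | (∀ j : Fin b, 1 ≤ (T.1 j).1 ∧ (T.1 j).1 ≤ 3 ∧ 1 ≤ (T.1 j).2 ∧ (T.1 j).2 ≤ 3 ∧
          (T.1 j).1 < (T.1 j).2) ∧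
       (∀ i : Fin a, 1 ≤ T.2 i ∧ T.2 i ≤ 3) ∧
       (∀ j j' : Fin b, j ≤ j' → (T.1 j).1 ≤ (T.1 j').1 ∧ (T.1 j).2 ≤ (T.1 j').2) ∧
       (∀ i i' : Fin a, i ≤ i' → T.2 i ≤ T.2 i') ∧
       (∀ (j : Fin b) (i : Fin a), (T.1 j).1 ≤ T.2 i)}

/-- The set of `C2`-semistandard tableaux of shape `(a,b)`: entries from `{1,2,3,4}`,
rows weakly increasing, columns strictly increasing, no column equal to `(1,4)`,
and at most one column equal to `(2,3)`. -/
def SC2 (a b : ℕ) : Set (TabT a b) :=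
  {T | (∀ j : Fin b, 1 ≤ (T.1 j).1 ∧ (T.1 j).1 ≤ 4 ∧ 1 ≤ (T.1 j).2 ∧ (T.1 j).2 ≤ 4 ∧
          (T.1 j).1 < (T.1 j).2) ∧
       (∀ i : Fin a, 1 ≤ T.2 i ∧ T.2 i ≤ 4) ∧
       (∀ j j' : Fin b, j ≤ j' → (T.1 j).1 ≤ (T.1 j').1 ∧ (T.1 j).2 ≤ (T.1 j').2) ∧
       (∀ i i' : Fin a, i ≤ i' → T.2 i ≤ T.2 i') ∧
       (∀ (j : Fin b) (i : Fin a), (T.1 j).1 ≤ T.2 i) ∧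
       (∀ j : Fin b, T.1 j ≠ (1, 4)) ∧
       (∀ j j' : Fin b, T.1 j = (2, 3) → T.1 j' = (2, 3) → j = j')}

/-- The restrictions of Figure 4.5 on a pair of adjacent length-two columns of a
`G2`-semistandard tableau. -/
def g2pair2 (c c' : ℕ × ℕ) : Prop :=
  (c = (1, 4) → c' ≠ (1, 4) ∧ c' ≠ (1, 5) ∧ c' ≠ (1, 6) ∧ c' ≠ (1, 7)) ∧
  (c = (1, 5) → c' ≠ (1, 5) ∧ c' ≠ (1, 6) ∧ c' ≠ (1, 7)) ∧
  (c = (1, 6) → c' ≠ (1, 6) ∧ c' ≠ (1, 7) ∧ c' ≠ (2, 6) ∧ c' ≠ (2, 7)) ∧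
  (c = (2, 6) → c' ≠ (2, 6) ∧ c' ≠ (2, 7)) ∧
  (c = (1, 7) → c' ≠ (1, 7) ∧ c' ≠ (2, 7) ∧ c' ≠ (3, 7) ∧ c' ≠ (4, 7)) ∧
  (c = (2, 7) → c' ≠ (2, 7) ∧ c' ≠ (3, 7) ∧ c' ≠ (4, 7)) ∧
  (c = (3, 7) → c' ≠ (3, 7) ∧ c' ≠ (4, 7)) ∧
  (c = (4, 7) → c' ≠ (4, 7))

/-- The restrictions of Figure 4.5 on a length-two column followed by a
length-one column in a `G2`-semistandard tableau. -/
def g2pair1 (c : ℕ × ℕ) (e : ℕ) : Prop :=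
  (c = (1, 4) → e ≠ 1) ∧
  (c = (1, 5) → e ≠ 1) ∧
  (c = (1, 6) → e ≠ 1 ∧ e ≠ 2) ∧
  (c = (2, 6) → e ≠ 2) ∧
  (c = (1, 7) → e ≠ 1 ∧ e ≠ 2 ∧ e ≠ 3 ∧ e ≠ 4) ∧
  (c = (2, 7) → e ≠ 2 ∧ e ≠ 3 ∧ e ≠ 4) ∧
  (c = (3, 7) → e ≠ 3 ∧ e ≠ 4) ∧
  (c = (4, 7) → e ≠ 4)

/-- The set of `G2`-semistandard tableaux of shape `(a,b)`. -/
def SG2 (a b : ℕ) : Set (TabT a b) :=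
  {T | (∀ j : Fin b, 1 ≤ (T.1 j).1 ∧ (T.1 j).1 ≤ 7 ∧ 1 ≤ (T.1 j).2 ∧ (T.1 j).2 ≤ 7 ∧
          (T.1 j).1 < (T.1 j).2) ∧
       (∀ i : Fin a, 1 ≤ T.2 i ∧ T.2 i ≤ 7) ∧
       (∀ j j' : Fin b, j ≤ j' → (T.1 j).1 ≤ (T.1 j').1 ∧ (T.1 j).2 ≤ (T.1 j').2) ∧
       (∀ i i' : Fin a, i ≤ i' → T.2 i ≤ T.2 i') ∧
       (∀ (j : Fin b) (i : Fin a), (T.1 j).1 ≤ T.2 i) ∧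
       (∀ i i' : Fin a, T.2 i = 4 → T.2 i' = 4 → i = i') ∧
       (∀ j : Fin b, T.1 j ≠ (2, 3) ∧ T.1 j ≠ (2, 4) ∧ T.1 j ≠ (3, 4) ∧ T.1 j ≠ (3, 5) ∧
          T.1 j ≠ (4, 5) ∧ T.1 j ≠ (4, 6) ∧ T.1 j ≠ (5, 6)) ∧
       (∀ j j' : Fin b, (j' : ℕ) = (j : ℕ) + 1 → g2pair2 (T.1 j) (T.1 j')) ∧
       (∀ (j : Fin b) (i : Fin a), (j : ℕ) + 1 = b → (i : ℕ) = 0 → g2pair1 (T.1 j) (T.2 i))}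
/-- The edge colors determined by tableau entries: for `A2`, the entry `1` gives
color `α` and the entry `2` gives color `β`. -/
def colEntA2 : ℕ → TwoColor := fun n => if n = 2 then TwoColor.beta else TwoColor.alpha

/-- For `C2`, entries `1` and `3` give color `α` and entry `2` gives color `β`. -/
def colEntC2 : ℕ → TwoColor := fun n => if n = 2 then TwoColor.beta else TwoColor.alpha

/-- For `G2`, entries `1, 3, 4, 6` give color `α` and entries `2, 5` give color `β`. -/
def colEntG2 : ℕ → TwoColor :=
  fun n => if n = 2 ∨ n = 5 then TwoColor.beta else TwoColor.alpha

/-- The colored covering relation of a lattice of semistandard tableaux: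
`T` covers `S` exactly when `S` is obtained from `T` by increasing a single
entry by `1`, and the edge is colored according to the entry of `T`
at the changed position (via `colEnt`). -/
def tabCov {a b : ℕ} (colEnt : ℕ → TwoColor) (SSet : Set (TabT a b)) (γ : TwoColor)
    (S T : {T : TabT a b // T ∈ SSet}) : Prop :=
  (∃ j : Fin b, colEnt ((T.1.1 j).1) = γ ∧
      S.1.1 j = ((T.1.1 j).1 + 1, (T.1.1 j).2) ∧
      (∀ j' : Fin b, j' ≠ j → S.1.1 j' = T.1.1 j') ∧ S.1.2 = T.1.2) ∨
  (∃ j : Fin b, colEnt ((T.1.1 j).2) = γ ∧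
      S.1.1 j = ((T.1.1 j).1, (T.1.1 j).2 + 1) ∧
      (∀ j' : Fin b, j' ≠ j → S.1.1 j' = T.1.1 j') ∧ S.1.2 = T.1.2) ∨
  (∃ i : Fin a, colEnt (T.1.2 i) = γ ∧
      S.1.2 i = T.1.2 i + 1 ∧
      (∀ i' : Fin a, i' ≠ i → S.1.2 i' = T.1.2 i') ∧ S.1.1 = T.1.1)

/-- The colored covering relation of the lattice `L_A2(a,b)`. -/
def covA2 (a b : ℕ) (γ : TwoColor) (S T : {T : TabT a b // T ∈ SA2 a b}) : Prop :=
  tabCov colEntA2 (SA2 a b) γ S T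

/-- The colored covering relation of the lattice `L_C2(a,b)`. -/
def covC2 (a b : ℕ) (γ : TwoColor) (S T : {T : TabT a b // T ∈ SC2 a b}) : Prop :=
  tabCov colEntC2 (SC2 a b) γ S T

/-- The colored covering relation of the lattice `L_G2(a,b)`. -/
def covG2 (a b : ℕ) (γ : TwoColor) (S T : {T : TabT a b // T ∈ SG2 a b}) : Prop :=
  tabCov colEntG2 (SG2 a b) γ S T

/-- The `A2` Cartan matrix, given by its rows `M_α = (2,−1)`, `M_β = (−1,2)`. -/
def MA2 : TwoColor → ℤ × ℤ
  | TwoColor.alpha => (2, -1)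
  | TwoColor.beta => (-1, 2)

/-- The `C2` Cartan matrix, given by its rows `M_α = (2,−1)`, `M_β = (−2,2)`. -/
def MC2 : TwoColor → ℤ × ℤ
  | TwoColor.alpha => (2, -1)
  | TwoColor.beta => (-2, 2)

/-- The `G2` Cartan matrix, given by its rows `M_α = (2,−1)`, `M_β = (−3,2)`. -/
def MG2 : TwoColor → ℤ × ℤ
  | TwoColor.alpha => (2, -1)
  | TwoColor.beta => (-3, 2)


/-!
`ρ_γ` and `δ_γ` are sums of local statistics. Along the string
`1 →α 2 →β 3 →α 4 →α 5 →β 6 →α 7` (the step `e → e + 1` has colour `colEntG2 e`) a single entry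
has explicit `γ`-string lengths; an admissible column has the sums over its two entries, except
that `(1,2)` and `(6,7)` carry no `α`-string. Summing over the columns of a tableau gives
`rhoStat γ` and `deltaStat γ`. Along a `γ`-edge only one position changes, and a finite check on
columns and entries shows that `rhoStat γ` rises by one, `deltaStat γ` drops by one and the vector
of differences moves by the row `M_γ` of the Cartan matrix. Conversely, if `rhoStat γ`
(resp. `deltaStat γ`) is positive, moving the rightmost raisable (resp. leftmost lowerable)
position keeps the tableau `G2`-semistandard, again by a finite check against the neighbouring
columns. A statistic with these two properties is `ρ_γ` (resp. `δ_γ`), so `wt` is the sum of the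
local weights and moves by `M_γ` along every `γ`-edge.
-/

open Finset Function

set_option synthInstance.maxSize 5000 in
instance (c d : ℕ × ℕ) : Decidable (g2pair2 c d) := by unfold g2pair2; infer_instance

set_option synthInstance.maxSize 5000 in
instance (c : ℕ × ℕ) (e : ℕ) : Decidable (g2pair1 c e) := by unfold g2pair1; infer_instance

section Chains

variable {V : Type*} {r : V → V → Prop}

theorem chainsStartingAt_eq_chainsEndingAt_flip (t : V) :
    chainsStartingAt r t = chainsEndingAt (flip r) t := by
  ext n
  constructor <;>
  · rintro ⟨c, hc, hr⟩
    refine ⟨fun i => c (n - i), by simpa using hc, fun i hi => ?_⟩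
    have := hr (n - (i + 1)) (by omega)
    rwa [show n - (i + 1) + 1 = n - i by omega] at this

theorem deltaOf_eq_rhoOf_flip : deltaOf r = rhoOf (flip r) := by
  ext t
  rw [deltaOf, rhoOf, chainsStartingAt_eq_chainsEndingAt_flip]

theorem rhoOf_eq_of_step (P : V → ℕ) (hstep : ∀ s t, r s t → P t = P s + 1)
    (hex : ∀ t, 0 < P t → ∃ s, r s t) (t : V) : rhoOf r t = P t := by
  have hle : ∀ n ∈ chainsEndingAt r t, n ≤ P t := by
    rintro n ⟨c, rfl, hc⟩
    have key : ∀ m ≤ n, m ≤ P (c m) := by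
      intro m hm
      induction m with
      | zero => exact Nat.zero_le _
      | succ m ih =>
        rw [hstep _ _ (hc m hm)]
        exact Nat.succ_le_succ (ih (by omega))
    exact key n le_rfl
  have hmem : ∀ m (t : V), P t = m → m ∈ chainsEndingAt r t := by
    intro m
    induction m with
    | zero => exact fun t _ => ⟨fun _ => t, rfl, by omega⟩
    | succ m ih =>
      intro t ht
      obtain ⟨s, hst⟩ := hex t (by omega)
      obtain ⟨c, hcm, hc⟩ := ih s (by have := hstep s t hst; omega)
      refine ⟨update c (m + 1) t, by simp, fun i hi => ?_⟩
      rcases Nat.lt_succ_iff_lt_or_eq.1 hi with hi | rfl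
      · rw [update_of_ne (by omega), update_of_ne (by omega)]
        exact hc i hi
      · rwa [update_of_ne (by omega), update_self, hcm]
  exact IsGreatest.csSup_eq ⟨hmem _ t rfl, hle⟩

end Chains

section Update

variable {ι α : Type*} [DecidableEq ι]

theorem forall_rel_update {R : ι → ι → Prop} {P : α → α → Prop} {u : ι → α}
    (hu : ∀ x y, R x y → P (u x) (u y)) {j : ι} {m : α} (hjj : R j j → P m m)
    (hl : ∀ x ≠ j, R x j → P (u x) m) (hr : ∀ y ≠ j, R j y → P m (u y)) :
    ∀ x y, R x y → P (update u j m x) (update u j m y) := by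
  intro x y hxy
  by_cases hx : x = j <;> by_cases hy : y = j
  · subst hx hy; simpa using hjj hxy
  · subst hx; simpa [update_of_ne hy] using hr y hy hxy
  · subst hy; simpa [update_of_ne hx] using hl x hx hxy
  · simpa [update_of_ne hx, update_of_ne hy] using hu x y hxy

theorem Monotone.update_of_le [PartialOrder ι] [Preorder α] {u : ι → α} (hu : Monotone u)
    {j : ι} {m : α} (hl : ∀ i < j, u i ≤ m) (hr : ∀ i, j < i → m ≤ u i) :
    Monotone (update u j m) :=
  forall_rel_update (R := (· ≤ ·)) (fun _ _ h => hu h) (fun _ => le_rfl)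
    (fun i hi hij => hl i (lt_of_le_of_ne hij hi))
    (fun i hi hji => hr i (lt_of_le_of_ne hji hi.symm))

theorem sum_comp_update_add {N : Type*} [AddCommMonoid N] [Fintype ι] (u : ι → α) (h : α → N)
    (j : ι) (m : α) : ∑ i, h (update u j m i) + h (u j) = ∑ i, h (u i) + h m := by
  rw [← add_sum_erase _ _ (mem_univ j), ← add_sum_erase _ (fun i => h (u i)) (mem_univ j),
    update_self, sum_congr rfl fun i hi => by rw [update_of_ne (ne_of_mem_erase hi)]]
  abel

end Update

namespace G2Tableau

variable {a b : ℕ}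

def admissibleColumns : List (ℕ × ℕ) :=
  [(1, 2), (1, 3), (1, 4), (1, 5), (1, 6), (1, 7), (2, 5), (2, 6), (2, 7), (3, 6), (3, 7), (4, 7),
    (5, 7), (6, 7)]

theorem mem_admissibleColumns_iff (c : ℕ × ℕ) : c ∈ admissibleColumns ↔
    (1 ≤ c.1 ∧ c.1 ≤ 7 ∧ 1 ≤ c.2 ∧ c.2 ≤ 7 ∧ c.1 < c.2) ∧
      (c ≠ (2, 3) ∧ c ≠ (2, 4) ∧ c ≠ (3, 4) ∧ c ≠ (3, 5) ∧ c ≠ (4, 5) ∧ c ≠ (4, 6) ∧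
        c ≠ (5, 6)) := by
  refine ⟨fun h => ?_, fun h => ?_⟩
  · revert c; decide
  · obtain ⟨x, y⟩ := c
    rcases h with ⟨⟨h1, h2, h3, h4, h5⟩, hne⟩
    simp only at h1 h2 h3 h4 h5
    interval_cases x <;> interval_cases y <;> simp_all [admissibleColumns]

theorem col_mem_admissibleColumns {T : TabT a b} (hT : T ∈ SG2 a b) (j : Fin b) :
    T.1 j ∈ admissibleColumns := by
  obtain ⟨hcol, -, -, -, -, -, hforb, -⟩ := hT
  exact (mem_admissibleColumns_iff _).2 ⟨hcol j, hforb j⟩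

def ColStep (γ : TwoColor) (c c' : ℕ × ℕ) : Prop :=
  c' = (c.1 + 1, c.2) ∧ colEntG2 c.1 = γ ∨ c' = (c.1, c.2 + 1) ∧ colEntG2 c.2 = γ

instance (γ : TwoColor) (c c' : ℕ × ℕ) : Decidable (ColStep γ c c') := by
  unfold ColStep; infer_instance

theorem ColStep.le {γ : TwoColor} {c c' : ℕ × ℕ} (h : ColStep γ c c') : c ≤ c' := by
  rcases h with ⟨rfl, -⟩ | ⟨rfl, -⟩ <;> simp [Prod.le_def]

theorem covG2_iff {γ : TwoColor} {s t : {T : TabT a b // T ∈ SG2 a b}} :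
    covG2 a b γ s t ↔
      (∃ j c, ColStep γ (t.1.1 j) c ∧ s.1 = (update t.1.1 j c, t.1.2)) ∨
        ∃ i, colEntG2 (t.1.2 i) = γ ∧ s.1 = (t.1.1, update t.1.2 i (t.1.2 i + 1)) := by
  constructor
  · rintro (⟨j, hγ, hj, hne, h2⟩ | ⟨j, hγ, hj, hne, h2⟩ | ⟨i, hγ, hi, hne, h1⟩)
    · exact Or.inl ⟨j, _, Or.inl ⟨rfl, hγ⟩, Prod.ext (eq_update_iff.2 ⟨hj, hne⟩) h2⟩
    · exact Or.inl ⟨j, _, Or.inr ⟨rfl, hγ⟩, Prod.ext (eq_update_iff.2 ⟨hj, hne⟩) h2⟩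
    · exact Or.inr ⟨i, hγ, Prod.ext h1 (eq_update_iff.2 ⟨hi, hne⟩)⟩
  · rintro (⟨j, c, (⟨rfl, hγ⟩ | ⟨rfl, hγ⟩), hs⟩ | ⟨i, hγ, hs⟩) <;> simp only [covG2, tabCov, hs]
    · exact Or.inl ⟨j, hγ, by simp, fun j' h => update_of_ne h _ _, trivial⟩
    · exact Or.inr (Or.inl ⟨j, hγ, by simp, fun j' h => update_of_ne h _ _, trivial⟩)
    · exact Or.inr (Or.inr ⟨i, hγ, by simp, fun i' h => update_of_ne h _ _, trivial⟩)

theorem updateEnt_mem {T : TabT a b} (hT : T ∈ SG2 a b) {i : Fin a} {v : ℕ} (hv : v ∈ Icc 1 7)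
    (hl : ∀ i' < i, T.2 i' ≤ v) (hr : ∀ i', i < i' → v ≤ T.2 i') (htop : ∀ j, (T.1 j).1 ≤ v)
    (h4 : v = 4 → ∀ i' ≠ i, T.2 i' ≠ 4)
    (hpair : (i : ℕ) = 0 → ∀ j : Fin b, (j : ℕ) + 1 = b → g2pair1 (T.1 j) v) :
    (T.1, update T.2 i v) ∈ SG2 a b := by
  obtain ⟨hcol, hent, hcolMono, hentMono, hcolEnt, hent4, hforb, hpair2, hpair1⟩ := hT
  refine ⟨hcol, ?_, hcolMono, Monotone.update_of_le (u := T.2) hentMono hl hr, ?_, ?_, hforb,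
    hpair2, ?_⟩
  · exact (forall_update_iff _ fun _ e => 1 ≤ e ∧ e ≤ 7).2 ⟨mem_Icc.1 hv, fun i' _ => hent i'⟩
  · intro j i'
    rcases eq_or_ne i' i with rfl | hi
    · simpa using htop j
    · simpa [update_of_ne hi] using hcolEnt j i'
  · intro i₁ i₂ h₁ h₂
    by_contra hne
    exact forall_rel_update (R := (· ≠ ·)) (P := fun x y => ¬(x = 4 ∧ y = 4))
      (fun x y h h4' => h (hent4 x y h4'.1 h4'.2)) (fun h => absurd rfl h)
      (fun x hx _ h4' => h4 h4'.2 x hx h4'.1) (fun y hy _ h4' => h4 h4'.1 y hy h4'.2)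
      i₁ i₂ hne ⟨h₁, h₂⟩
  · intro j i' hj hi'
    rcases eq_or_ne i' i with rfl | hne
    · simpa using hpair hi' j hj
    · simpa [update_of_ne hne] using hpair1 j i' hj hi'

theorem updateCol_mem {T : TabT a b} (hT : T ∈ SG2 a b) {j : Fin b} {c : ℕ × ℕ}
    (hc : c ∈ admissibleColumns) (hl : ∀ j' < j, T.1 j' ≤ c) (hr : ∀ j', j < j' → c ≤ T.1 j')
    (hpl : ∀ j' : Fin b, (j : ℕ) = j' + 1 → g2pair2 (T.1 j') c)
    (hpr : ∀ j' : Fin b, (j' : ℕ) = j + 1 → g2pair2 c (T.1 j')) (htop : ∀ i, c.1 ≤ T.2 i)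
    (hpair : (j : ℕ) + 1 = b → ∀ i : Fin a, (i : ℕ) = 0 → g2pair1 c (T.2 i)) :
    (update T.1 j c, T.2) ∈ SG2 a b := by
  have hadm : ∀ j', update T.1 j c j' ∈ admissibleColumns :=
    (forall_update_iff T.1 fun _ c => c ∈ admissibleColumns).2
      ⟨hc, fun j' _ => col_mem_admissibleColumns hT j'⟩
  obtain ⟨-, hent, hcolMono, hentMono, hcolEnt, hent4, -, hpair2, hpair1⟩ := hT
  refine ⟨fun j' => ((mem_admissibleColumns_iff _).1 (hadm j')).1, hent,
    Monotone.update_of_le (u := T.1) hcolMono hl hr, hentMono, ?_, hent4,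
    fun j' => ((mem_admissibleColumns_iff _).1 (hadm j')).2,
    forall_rel_update hpair2 (by omega) (fun x _ h => hpl x h) (fun y _ h => hpr y h), ?_⟩
  · intro j' i
    rcases eq_or_ne j' j with rfl | hne
    · simpa using htop i
    · simpa [update_of_ne hne] using hcolEnt j' i
  · intro j' i hj hi
    rcases eq_or_ne j' j with rfl | hne
    · simpa using hpair hj i hi
    · simpa [update_of_ne hne] using hpair1 j' i hj hi

def tabSum {N : Type*} [AddCommMonoid N] (f : ℕ × ℕ → N) (g : ℕ → N) (T : TabT a b) : N :=
  ∑ j, f (T.1 j) + ∑ i, g (T.2 i)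

section tabSum

variable {N : Type*} [AddCommMonoid N] (f : ℕ × ℕ → N) (g : ℕ → N) (T : TabT a b)

theorem tabSum_update_col (j : Fin b) (c : ℕ × ℕ) :
    tabSum f g (update T.1 j c, T.2) + f (T.1 j) = tabSum f g T + f c := by
  simp only [tabSum, add_right_comm _ (∑ i, g (T.2 i)), sum_comp_update_add]

theorem tabSum_update_ent (i : Fin a) (e : ℕ) :
    tabSum f g (T.1, update T.2 i e) + g (T.2 i) = tabSum f g T + g e := by
  simp only [tabSum, add_assoc, sum_comp_update_add]

end tabSum

theorem tabSum_pos_iff (f : ℕ × ℕ → ℕ) (g : ℕ → ℕ) (T : TabT a b) :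
    0 < tabSum f g T ↔ (∃ j, 0 < f (T.1 j)) ∨ ∃ i, 0 < g (T.2 i) := by
  simp [tabSum, add_pos_iff, sum_pos_iff]

/-- The constants stand on both sides so that the lemma also applies to `ℕ`-valued statistics
that drop along an edge. -/
theorem tabSum_add_eq_of_covG2 {N : Type*} [AddCancelCommMonoid N] {f : ℕ × ℕ → N}
    {g : ℕ → N} {k k' : N} {γ : TwoColor}
    (hcol : ∀ c ∈ admissibleColumns, ∀ c' ∈ admissibleColumns, ColStep γ c c' →
      f c + k = f c' + k')
    (hent : ∀ e ∈ Icc 1 6, colEntG2 e = γ → g e + k = g (e + 1) + k')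
    {s t : {T : TabT a b // T ∈ SG2 a b}} (h : covG2 a b γ s t) :
    tabSum f g t.1 + k = tabSum f g s.1 + k' := by
  obtain ⟨S, hS⟩ := s
  obtain ⟨T, hT⟩ := t
  rcases covG2_iff.1 h with ⟨j, c, hstep, rfl : S = _⟩ | ⟨i, hγ, rfl : S = _⟩
  · have hc : c ∈ admissibleColumns := by simpa using col_mem_admissibleColumns hS j
    have hf := hcol _ (col_mem_admissibleColumns hT j) c hc hstep
    refine add_right_cancel (b := f c) ?_
    calc tabSum f g T + k + f c = tabSum f g T + f c + k := add_right_comm ..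
      _ = tabSum f g (update T.1 j c, T.2) + (f (T.1 j) + k) := by
        rw [← tabSum_update_col, add_assoc]
      _ = _ := by rw [hf, ← add_assoc, add_right_comm]
  · have he : T.2 i ∈ Icc 1 6 := by
      obtain ⟨_, hSent, _⟩ := hS
      obtain ⟨_, hTent, _⟩ := hT
      have h7 := (hSent i).2
      simp only [update_self] at h7
      exact mem_Icc.2 ⟨(hTent i).1, by omega⟩
    have hg := hent _ he hγ
    refine add_right_cancel (b := g (T.2 i + 1)) ?_
    calc tabSum f g T + k + g (T.2 i + 1) = tabSum f g T + g (T.2 i + 1) + k :=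
          add_right_comm ..
      _ = tabSum f g (T.1, update T.2 i (T.2 i + 1)) + (g (T.2 i) + k) := by
        rw [← tabSum_update_ent, add_assoc]
      _ = _ := by rw [hg, ← add_assoc, add_right_comm]

/-- `ρ_γ` of a single entry in the string `1 →α 2 →β 3 →α 4 →α 5 →β 6 →α 7`;
`entDelta` is `δ_γ`. -/
def entRho : TwoColor → ℕ → ℕ
  | .alpha, 1 => 1 | .alpha, 3 => 2 | .alpha, 4 => 1 | .alpha, 6 => 1
  | .beta, 2 => 1 | .beta, 5 => 1
  | _, _ => 0

def entDelta : TwoColor → ℕ → ℕ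
  | .alpha, 2 => 1 | .alpha, 4 => 1 | .alpha, 5 => 2 | .alpha, 7 => 1
  | .beta, 3 => 1 | .beta, 6 => 1
  | _, _ => 0

def colStat (f : TwoColor → ℕ → ℕ) (γ : TwoColor) (c : ℕ × ℕ) : ℕ :=
  if γ = .alpha ∧ (c = (1, 2) ∨ c = (6, 7)) then 0 else f γ c.1 + f γ c.2

def wtVec (ρ δ : TwoColor → ℕ) : ℤ × ℤ :=
  ((ρ .alpha : ℤ) - δ .alpha, (ρ .beta : ℤ) - δ .beta)

def colWt (c : ℕ × ℕ) : ℤ × ℤ := wtVec (colStat entRho · c) (colStat entDelta · c)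

def entWt (e : ℕ) : ℤ × ℤ := wtVec (entRho · e) (entDelta · e)

def rhoStat (γ : TwoColor) : TabT a b → ℕ := tabSum (colStat entRho γ) (entRho γ)

def deltaStat (γ : TwoColor) : TabT a b → ℕ := tabSum (colStat entDelta γ) (entDelta γ)

def wtStat : TabT a b → ℤ × ℤ := tabSum colWt entWt

def colRaise : TwoColor → ℕ × ℕ → ℕ × ℕ
  | .alpha, (1, 3) => (1, 4) | .alpha, (1, 4) => (1, 5) | .alpha, (1, 5) => (2, 5)
  | .alpha, (1, 6) => (2, 6) | .alpha, (1, 7) => (2, 7) | .alpha, (2, 6) => (2, 7)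
  | .alpha, (3, 6) => (3, 7) | .alpha, (3, 7) => (4, 7) | .alpha, (4, 7) => (5, 7)
  | .beta, (1, 2) => (1, 3) | .beta, (1, 5) => (1, 6) | .beta, (2, 5) => (2, 6)
  | .beta, (2, 6) => (3, 6) | .beta, (2, 7) => (3, 7) | .beta, (5, 7) => (6, 7)
  | _, c => c

def colLower : TwoColor → ℕ × ℕ → ℕ × ℕ
  | .alpha, (1, 4) => (1, 3) | .alpha, (1, 5) => (1, 4) | .alpha, (1, 7) => (1, 6)
  | .alpha, (2, 5) => (1, 5) | .alpha, (2, 6) => (1, 6) | .alpha, (2, 7) => (2, 6)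
  | .alpha, (3, 7) => (3, 6) | .alpha, (4, 7) => (3, 7) | .alpha, (5, 7) => (4, 7)
  | .beta, (1, 3) => (1, 2) | .beta, (1, 6) => (1, 5) | .beta, (2, 6) => (2, 5)
  | .beta, (3, 6) => (2, 6) | .beta, (3, 7) => (2, 7) | .beta, (6, 7) => (5, 7)
  | _, c => c

section Tables

variable (γ : TwoColor)

theorem colStat_entRho_step : ∀ c ∈ admissibleColumns, ∀ c' ∈ admissibleColumns,
    ColStep γ c c' → colStat entRho γ c = colStat entRho γ c' + 1 := by
  cases γ <;> decide

theorem colStat_entDelta_step : ∀ c ∈ admissibleColumns, ∀ c' ∈ admissibleColumns,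
    ColStep γ c c' → colStat entDelta γ c + 1 = colStat entDelta γ c' := by
  cases γ <;> decide

theorem colWt_step : ∀ c ∈ admissibleColumns, ∀ c' ∈ admissibleColumns,
    ColStep γ c c' → colWt c = colWt c' + MG2 γ := by
  cases γ <;> decide

theorem entRho_step : ∀ e ∈ Icc 1 6, colEntG2 e = γ → entRho γ e = entRho γ (e + 1) + 1 := by
  cases γ <;> decide

theorem entDelta_step : ∀ e ∈ Icc 1 6, colEntG2 e = γ → entDelta γ e + 1 = entDelta γ (e + 1) := by
  cases γ <;> decide

theorem entWt_step : ∀ e ∈ Icc 1 6, colEntG2 e = γ → entWt e = entWt (e + 1) + MG2 γ := by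
  cases γ <;> decide

theorem entRho_pos : ∀ e ∈ Icc 1 7, 0 < entRho γ e → e + 1 ∈ Icc 1 7 ∧ colEntG2 e = γ := by
  cases γ <;> decide

theorem entDelta_pos :
    ∀ e ∈ Icc 1 7, 0 < entDelta γ e → e - 1 ∈ Icc 1 7 ∧ colEntG2 (e - 1) = γ := by
  cases γ <;> decide

theorem entRho_four_pos : 0 < entRho γ 3 → 0 < entRho γ 4 := by
  cases γ <;> decide

theorem entDelta_four_pos : 0 < entDelta γ 5 → 0 < entDelta γ 4 := by
  cases γ <;> decide

theorem entDelta_fst_eq_zero : ∀ c ∈ admissibleColumns, colStat entDelta γ c = 0 →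
    entDelta γ c.1 = 0 := by
  cases γ <;> decide

theorem g2pair1_entRho : ∀ c ∈ admissibleColumns, ∀ e ∈ Icc 1 7, 0 < entRho γ e → c.1 ≤ e →
    g2pair1 c e → g2pair1 c (e + 1) := by
  cases γ <;> decide

theorem g2pair1_entDelta : ∀ c ∈ admissibleColumns, colStat entDelta γ c = 0 →
    ∀ e ∈ Icc 1 7, 0 < entDelta γ e → c.1 ≤ e → g2pair1 c e → g2pair1 c (e - 1) := by
  cases γ <;> decide

theorem colRaise_mem_colStep : ∀ c ∈ admissibleColumns, 0 < colStat entRho γ c →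
    colRaise γ c ∈ admissibleColumns ∧ ColStep γ c (colRaise γ c) := by
  cases γ <;> decide

theorem colRaise_compat_right : ∀ c ∈ admissibleColumns, 0 < colStat entRho γ c →
    ∀ d ∈ admissibleColumns, c ≤ d → colStat entRho γ d = 0 →
      colRaise γ c ≤ d ∧ (g2pair2 c d → g2pair2 (colRaise γ c) d) := by
  cases γ <;> decide

theorem colRaise_compat_left : ∀ c ∈ admissibleColumns, 0 < colStat entRho γ c →
    ∀ d ∈ admissibleColumns, d ≤ c → g2pair2 d c → g2pair2 d (colRaise γ c) := by
  cases γ <;> decide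

theorem colRaise_compat_ent : ∀ c ∈ admissibleColumns, 0 < colStat entRho γ c →
    ∀ e ∈ Icc 1 7, entRho γ e = 0 → c.1 ≤ e →
      (colRaise γ c).1 ≤ e ∧ (g2pair1 c e → g2pair1 (colRaise γ c) e) := by
  cases γ <;> decide

theorem colLower_mem_colStep : ∀ c ∈ admissibleColumns, 0 < colStat entDelta γ c →
    colLower γ c ∈ admissibleColumns ∧ ColStep γ (colLower γ c) c := by
  cases γ <;> decide

theorem colLower_compat_left : ∀ c ∈ admissibleColumns, 0 < colStat entDelta γ c →
    ∀ d ∈ admissibleColumns, d ≤ c → colStat entDelta γ d = 0 →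
      d ≤ colLower γ c ∧ (g2pair2 d c → g2pair2 d (colLower γ c)) := by
  cases γ <;> decide

theorem colLower_compat_right : ∀ c ∈ admissibleColumns, 0 < colStat entDelta γ c →
    ∀ d ∈ admissibleColumns, c ≤ d → g2pair2 c d → g2pair2 (colLower γ c) d := by
  cases γ <;> decide

theorem colLower_compat_ent : ∀ c ∈ admissibleColumns, 0 < colStat entDelta γ c →
    ∀ e ∈ Icc 1 7, c.1 ≤ e → g2pair1 c e → g2pair1 (colLower γ c) e := by
  cases γ <;> decide

end Tables

section Steps

variable {γ : TwoColor} {s t : {T : TabT a b // T ∈ SG2 a b}}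

theorem rhoStat_step (h : covG2 a b γ s t) : rhoStat γ t.1 = rhoStat γ s.1 + 1 :=
  tabSum_add_eq_of_covG2 (k := 0) (colStat_entRho_step γ) (entRho_step γ) h

theorem deltaStat_step (h : covG2 a b γ s t) : deltaStat γ s.1 = deltaStat γ t.1 + 1 :=
  (tabSum_add_eq_of_covG2 (k' := 0) (colStat_entDelta_step γ) (entDelta_step γ) h).symm

theorem wtStat_step (h : covG2 a b γ s t) : wtStat t.1 = wtStat s.1 + MG2 γ := by
  simpa only [wtStat, add_zero] using tabSum_add_eq_of_covG2 (k := 0)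
    (fun c hc c' hc' hst => (add_zero _).trans (colWt_step γ c hc c' hc' hst))
    (fun e he hγ => (add_zero _).trans (entWt_step γ e he hγ)) h

end Steps

section Moves

variable {γ : TwoColor}

theorem exists_covG2_of_entRho_pos (t : {T : TabT a b // T ∈ SG2 a b})
    (h : ∃ i, 0 < entRho γ (t.1.2 i)) : ∃ s, covG2 a b γ s t := by
  obtain ⟨T, hT⟩ := t
  obtain ⟨i, hi⟩ := exists_maximal_of_wellFoundedGT _ h
  obtain ⟨-, hent, -, hentMono, hcolEnt, -, -, -, hpair1⟩ := id hT
  have he := mem_Icc.2 (hent i)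
  obtain ⟨he', hγ⟩ := entRho_pos γ _ he hi.prop
  have hright : ∀ i', i < i' → T.2 i ≠ T.2 i' := fun i' hlt heq =>
    hi.not_prop_of_gt hlt (heq ▸ hi.prop)
  have hS : (T.1, update T.2 i (T.2 i + 1)) ∈ SG2 a b := by
    refine updateEnt_mem hT he' (fun i' hlt => (hentMono i' i hlt.le).trans (Nat.le_succ _))
      (fun i' hlt => Nat.lt_of_le_of_ne (hentMono i i' hlt.le) (hright i' hlt))
      (fun j => (hcolEnt j i).trans (Nat.le_succ _)) (fun h4 i' hne h4' => ?_)
      (fun hi0 j hj => g2pair1_entRho γ _ (col_mem_admissibleColumns hT j) _ he hi.prop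
        (hcolEnt j i) (hpair1 j i hj hi0))
    rcases lt_or_gt_of_ne hne with hlt | hlt
    · have := hentMono i' i hlt.le
      omega
    -- a second `4` further right would itself be raisable
    · have h3 : T.2 i = 3 := by omega
      exact hi.not_prop_of_gt hlt (h4' ▸ entRho_four_pos γ (h3 ▸ hi.prop))
  exact ⟨⟨_, hS⟩, covG2_iff.2 (Or.inr ⟨i, hγ, rfl⟩)⟩

theorem exists_covG2_of_colRho_pos (t : {T : TabT a b // T ∈ SG2 a b})
    (hent : ∀ i, entRho γ (t.1.2 i) = 0) (h : ∃ j, 0 < colStat entRho γ (t.1.1 j)) :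
    ∃ s, covG2 a b γ s t := by
  obtain ⟨T, hT⟩ := t
  obtain ⟨j, hj⟩ := exists_maximal_of_wellFoundedGT _ h
  obtain ⟨-, hentB, hcolMono, -, hcolEnt, -, -, hpair2, hpair1⟩ := id hT
  have hmono : Monotone T.1 := hcolMono
  have hc := col_mem_admissibleColumns hT j
  obtain ⟨hc', hstep⟩ := colRaise_mem_colStep γ _ hc hj.prop
  have hright : ∀ j', j < j' → colRaise γ (T.1 j) ≤ T.1 j' ∧
      (g2pair2 (T.1 j) (T.1 j') → g2pair2 (colRaise γ (T.1 j)) (T.1 j')) := fun j' hlt =>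
    colRaise_compat_right γ _ hc hj.prop _ (col_mem_admissibleColumns hT j') (hmono hlt.le)
      (Nat.eq_zero_of_not_pos (hj.not_prop_of_gt hlt))
  have hentCompat := fun i => colRaise_compat_ent γ _ hc hj.prop _ (mem_Icc.2 (hentB i)) (hent i)
    (hcolEnt j i)
  have hS : (update T.1 j (colRaise γ (T.1 j)), T.2) ∈ SG2 a b :=
    updateCol_mem hT hc' (fun j' hlt => (hmono hlt.le).trans hstep.le)
      (fun j' hlt => (hright j' hlt).1)
      (fun j' h => colRaise_compat_left γ _ hc hj.prop _ (col_mem_admissibleColumns hT j')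
        (hmono (Fin.le_def.2 (by omega))) (hpair2 j' j h))
      (fun j' h => (hright j' (Fin.lt_def.2 (by omega))).2 (hpair2 j j' h))
      (fun i => (hentCompat i).1) (fun hb i hi => (hentCompat i).2 (hpair1 j i hb hi))
  exact ⟨⟨_, hS⟩, covG2_iff.2 (Or.inl ⟨j, _, hstep, rfl⟩)⟩

theorem exists_covG2_of_entDelta_pos (t : {T : TabT a b // T ∈ SG2 a b})
    (hcol : ∀ j, colStat entDelta γ (t.1.1 j) = 0) (h : ∃ i, 0 < entDelta γ (t.1.2 i)) :
    ∃ u, covG2 a b γ t u := by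
  obtain ⟨T, hT⟩ := t
  obtain ⟨i, hi⟩ := exists_minimal_of_wellFoundedLT _ h
  obtain ⟨-, hent, -, hentMono, hcolEnt, -, -, -, hpair1⟩ := id hT
  have he := mem_Icc.2 (hent i)
  obtain ⟨he', hγ⟩ := entDelta_pos γ _ he hi.prop
  have hleft : ∀ i', i' < i → T.2 i' ≠ T.2 i := fun i' hlt heq =>
    hi.not_prop_of_lt hlt (heq ▸ hi.prop)
  have htop : ∀ j, (T.1 j).1 ≠ T.2 i := fun j heq => by
    have := entDelta_fst_eq_zero γ _ (col_mem_admissibleColumns hT j) (hcol j)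
    rw [heq] at this
    exact hi.prop.ne' this
  have hU : (T.1, update T.2 i (T.2 i - 1)) ∈ SG2 a b := by
    refine updateEnt_mem hT he' (fun i' hlt => ?_)
      (fun i' hlt => (Nat.sub_le _ _).trans (hentMono i i' hlt.le))
      (fun j => ?_) (fun h4 i' hne h4' => ?_)
      (fun hi0 j hj => g2pair1_entDelta γ _ (col_mem_admissibleColumns hT j) (hcol j) _ he hi.prop
        (hcolEnt j i) (hpair1 j i hj hi0))
    · have := hentMono i' i hlt.le
      have := hleft i' hlt
      omega
    · have := hcolEnt j i
      have := htop j
      omega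
    · rcases lt_or_gt_of_ne hne with hlt | hlt
      -- a second `4` further left would itself be lowerable
      · have h5 : T.2 i = 5 := by have := (mem_Icc.1 he'); omega
        exact hi.not_prop_of_lt hlt (h4' ▸ entDelta_four_pos γ (h5 ▸ hi.prop))
      · have := hentMono i i' hlt.le
        omega
  refine ⟨⟨_, hU⟩, covG2_iff.2 (Or.inr ⟨i, by simpa using hγ, ?_⟩)⟩
  have h1 : T.2 i - 1 + 1 = T.2 i := by have := (mem_Icc.1 he'); omega
  simp [h1]

theorem exists_covG2_of_colDelta_pos (t : {T : TabT a b // T ∈ SG2 a b})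
    (h : ∃ j, 0 < colStat entDelta γ (t.1.1 j)) : ∃ u, covG2 a b γ t u := by
  obtain ⟨T, hT⟩ := t
  obtain ⟨j, hj⟩ := exists_minimal_of_wellFoundedLT _ h
  obtain ⟨-, hent, hcolMono, -, hcolEnt, -, -, hpair2, hpair1⟩ := id hT
  have hmono : Monotone T.1 := hcolMono
  have hc := col_mem_admissibleColumns hT j
  obtain ⟨hc', hstep⟩ := colLower_mem_colStep γ _ hc hj.prop
  have hleft : ∀ j', j' < j → T.1 j' ≤ colLower γ (T.1 j) ∧
      (g2pair2 (T.1 j') (T.1 j) → g2pair2 (T.1 j') (colLower γ (T.1 j))) := fun j' hlt =>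
    colLower_compat_left γ _ hc hj.prop _ (col_mem_admissibleColumns hT j') (hmono hlt.le)
      (Nat.eq_zero_of_not_pos (hj.not_prop_of_lt hlt))
  have hU : (update T.1 j (colLower γ (T.1 j)), T.2) ∈ SG2 a b :=
    updateCol_mem hT hc' (fun j' hlt => (hleft j' hlt).1)
      (fun j' hlt => hstep.le.trans (hmono hlt.le))
      (fun j' h => (hleft j' (Fin.lt_def.2 (by omega))).2 (hpair2 j' j h))
      (fun j' h => colLower_compat_right γ _ hc hj.prop _ (col_mem_admissibleColumns hT j')
        (hmono (Fin.le_def.2 (by omega))) (hpair2 j j' h))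
      (fun i => hstep.le.1.trans (hcolEnt j i))
      (fun hb i hi => colLower_compat_ent γ _ hc hj.prop _ (mem_Icc.2 (hent i)) (hcolEnt j i)
        (hpair1 j i hb hi))
  exact ⟨⟨_, hU⟩, covG2_iff.2 (Or.inl ⟨j, T.1 j, by simpa using hstep, by simp⟩)⟩

theorem exists_covG2_of_rhoStat_pos (t : {T : TabT a b // T ∈ SG2 a b})
    (h : 0 < rhoStat γ t.1) : ∃ s, covG2 a b γ s t := by
  by_cases hent : ∃ i, 0 < entRho γ (t.1.2 i)
  · exact exists_covG2_of_entRho_pos t hent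
  · refine exists_covG2_of_colRho_pos t (by simpa using hent) ?_
    simpa [hent] using (tabSum_pos_iff _ _ _).1 h

theorem exists_covG2_of_deltaStat_pos (t : {T : TabT a b // T ∈ SG2 a b})
    (h : 0 < deltaStat γ t.1) : ∃ u, covG2 a b γ t u := by
  by_cases hcol : ∃ j, 0 < colStat entDelta γ (t.1.1 j)
  · exact exists_covG2_of_colDelta_pos t hcol
  · refine exists_covG2_of_entDelta_pos t (by simpa using hcol) ?_
    simpa [hcol] using (tabSum_pos_iff _ _ _).1 h

end Moves

theorem rhoOf_covG2 (γ : TwoColor) (t : {T : TabT a b // T ∈ SG2 a b}) :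
    rhoOf (covG2 a b γ) t = rhoStat γ t.1 :=
  rhoOf_eq_of_step (fun t => rhoStat γ t.1) (fun _ _ => rhoStat_step)
    exists_covG2_of_rhoStat_pos t

theorem deltaOf_covG2 (γ : TwoColor) (t : {T : TabT a b // T ∈ SG2 a b}) :
    deltaOf (covG2 a b γ) t = deltaStat γ t.1 := by
  rw [deltaOf_eq_rhoOf_flip]
  exact rhoOf_eq_of_step (fun t => deltaStat γ t.1) (fun _ _ => deltaStat_step)
    exists_covG2_of_deltaStat_pos t

theorem wtOf_covG2 (t : {T : TabT a b // T ∈ SG2 a b}) : wtOf (covG2 a b) t = wtStat t.1 := by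
  simp only [wtOf, rhoOf_covG2, deltaOf_covG2, rhoStat, deltaStat, wtStat, tabSum, colWt, entWt,
    wtVec, Prod.ext_iff, Prod.fst_add, Prod.snd_add, Prod.fst_sum, Prod.snd_sum, Nat.cast_add,
    Nat.cast_sum, sum_sub_distrib]
  constructor <;> ring

end G2Tableau

/-- For all `a, b ≥ 0`, the edge-colored distributive lattice `L_G2(a,b)` of
`G2`-semistandard tableaux of shape `(a,b)` satisfies the structure condition for
the `G2` Cartan matrix with rows `M_α = (2,−1)`, `M_β = (−3,2)`. -/
theorem G2_lattice_structure_condition (a b : ℕ) :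
    StructureCondition (covG2 a b) MG2 := by
  intro γ s t h
  rw [G2Tableau.wtOf_covG2, G2Tableau.wtOf_covG2]
  exact G2Tableau.wtStat_step h
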